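/- In a normed algebra (or for N×N matrices), the Lie product formula holds: lim_{n→∞} (exp(X/n)·exp(Y/n))ⁿ = exp(X + Y). -/

import Mathlib

/-!
Put `a n = exp (X/n) * exp (Y/n)` and `b n = exp ((X+Y)/n)`, so that `b n ^ n = exp (X+Y)`.
Since `t ↦ exp (t X) exp (t Y) - exp (t (X+Y))` vanishes to first order at `0`,
`a n - b n = o(1/n)`.
Telescoping `a^n - b^n = ∑ a^k (a - b) b^(n-1-k)` together with `‖a n‖, ‖b n‖ ≤ e^((‖X‖+‖Y‖)/n)`
gives `‖a n ^ n - b n ^ n‖ ≤ e^(‖X‖+‖Y‖) n ‖a n - b n‖ → 0`.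
The bound `‖exp z‖ ≤ e^‖z‖` needs `‖1‖ = 1`; in general one passes to the left regular
representation `𝔸 → (𝔸 →L[ℝ] 𝔸)`, where it holds.
-/

open NormedSpace Filter Topology Asymptotics

section NormedRing

variable {𝔸 : Type*} [NormedRing 𝔸]

theorem norm_pow_succ_sub_pow_succ_le {a b : 𝔸} {M : ℝ} (ha : ‖a‖ ≤ M) (hb : ‖b‖ ≤ M) (n : ℕ) :
    ‖a ^ (n + 1) - b ^ (n + 1)‖ ≤ (n + 1) * M ^ n * ‖a - b‖ := by
  induction n with
  | zero => simp
  | succ n ih =>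
    have hsplit : a ^ (n + 2) - b ^ (n + 2)
        = a ^ (n + 1) * (a - b) + (a ^ (n + 1) - b ^ (n + 1)) * b := by
      rw [pow_succ _ (n + 1), pow_succ _ (n + 1)]
      noncomm_ring
    have hM : 0 ≤ M := (norm_nonneg a).trans ha
    have hpow : ‖a ^ (n + 1)‖ ≤ M ^ (n + 1) :=
      (norm_pow_le' a n.succ_pos).trans (pow_le_pow_left₀ (norm_nonneg a) ha _)
    calc ‖a ^ (n + 2) - b ^ (n + 2)‖
        ≤ ‖a ^ (n + 1)‖ * ‖a - b‖ + ‖a ^ (n + 1) - b ^ (n + 1)‖ * ‖b‖ := by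
          rw [hsplit]
          exact (norm_add_le _ _).trans (add_le_add (norm_mul_le _ _) (norm_mul_le _ _))
      _ ≤ M ^ (n + 1) * ‖a - b‖ + (n + 1) * M ^ n * ‖a - b‖ * M := by gcongr
      _ = (↑(n + 1) + 1) * M ^ (n + 1) * ‖a - b‖ := by push_cast; ring

theorem tendsto_pow_sub_pow_of_isLittleO {a b : ℕ → 𝔸} {t : ℝ} (ht : 0 ≤ t)
    (ha : ∀ n : ℕ, ‖a n‖ ≤ Real.exp (t / n)) (hb : ∀ n : ℕ, ‖b n‖ ≤ Real.exp (t / n))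
    (hab : (fun n => a n - b n) =o[atTop] fun n => (n : ℝ)⁻¹) :
    Tendsto (fun n => a n ^ n - b n ^ n) atTop (𝓝 0) := by
  have hlin : Tendsto (fun n : ℕ => n * ‖a n - b n‖) atTop (𝓝 0) := by
    refine hab.norm_left.tendsto_div_nhds_zero.congr fun n => ?_
    rw [div_inv_eq_mul, mul_comm]
  rw [← tendsto_add_atTop_iff_nat 1] at hlin ⊢
  refine squeeze_zero_norm (fun n => ?_)
    (by simpa only [mul_zero] using hlin.const_mul (Real.exp t))
  have hexp : Real.exp (t / ↑(n + 1)) ^ n ≤ Real.exp t := by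
    rw [← Real.exp_nat_mul, Real.exp_le_exp, mul_div_assoc']
    exact div_le_of_le_mul₀ (by positivity) ht (by push_cast; nlinarith)
  calc ‖a (n + 1) ^ (n + 1) - b (n + 1) ^ (n + 1)‖
      ≤ (n + 1) * Real.exp (t / ↑(n + 1)) ^ n * ‖a (n + 1) - b (n + 1)‖ :=
        norm_pow_succ_sub_pow_succ_le (ha _) (hb _) n
    _ ≤ (n + 1) * Real.exp t * ‖a (n + 1) - b (n + 1)‖ := by gcongr
    _ = Real.exp t * (↑(n + 1) * ‖a (n + 1) - b (n + 1)‖) := by push_cast; ring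

end NormedRing

section Exp

variable {𝔸 : Type*} [NormedRing 𝔸] [NormedAlgebra ℝ 𝔸]

theorem NormedSpace.norm_exp_le_exp_norm [NormOneClass 𝔸] (x : 𝔸) : ‖exp x‖ ≤ Real.exp ‖x‖ := by
  have hreal : HasSum (fun n : ℕ => ‖x‖ ^ n / n.factorial) (Real.exp ‖x‖) := by
    rw [Real.exp_eq_exp_ℝ]
    exact expSeries_div_hasSum_exp ‖x‖
  have hterm (n : ℕ) : ‖(n.factorial⁻¹ : ℝ) • x ^ n‖ ≤ ‖x‖ ^ n / n.factorial := by
    rw [norm_smul, norm_inv, RCLike.norm_natCast, inv_mul_eq_div]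
    gcongr
    exact norm_pow_le x n
  rw [exp_eq_tsum ℝ, ← hreal.tsum_eq]
  exact (norm_tsum_le_tsum_norm (norm_expSeries_summable' x)).trans
    ((norm_expSeries_summable' x).tsum_le_tsum hterm hreal.summable)

theorem NormedSpace.norm_exp_mul_exp_le [NormOneClass 𝔸] (x y : 𝔸) :
    ‖exp x * exp y‖ ≤ Real.exp (‖x‖ + ‖y‖) := by
  rw [Real.exp_add]
  exact (norm_mul_le _ _).trans (by gcongr <;> exact norm_exp_le_exp_norm _)

theorem NormedSpace.exp_inv_smul_pow [CompleteSpace 𝔸] {n : ℕ} (hn : n ≠ 0) (x : 𝔸) :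
    exp ((n : ℝ)⁻¹ • x) ^ n = exp x := by
  let : NormedAlgebra ℚ 𝔸 := .restrictScalars ℚ ℝ 𝔸
  rw [← exp_nsmul, ← Nat.cast_smul_eq_nsmul ℝ, smul_smul, mul_inv_cancel₀ (by exact_mod_cast hn),
    one_smul]

theorem NormedSpace.isLittleO_exp_smul_mul_exp_smul_sub_exp_smul [CompleteSpace 𝔸] (x y : 𝔸) :
    (fun t : ℝ => exp (t • x) * exp (t • y) - exp (t • (x + y))) =o[𝓝 0] fun t => t := by
  have hderiv := ((hasDerivAt_exp_smul_const x (0 : ℝ)).mul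
    (hasDerivAt_exp_smul_const y (0 : ℝ))).sub (hasDerivAt_exp_smul_const (x + y) (0 : ℝ))
  simp only [zero_smul, exp_zero, one_mul, mul_one, sub_self] at hderiv
  simpa using hasDerivAt_iff_isLittleO_nhds_zero.mp hderiv

theorem NormedSpace.lie_product_formula_of_normOneClass [NormOneClass 𝔸] [CompleteSpace 𝔸]
    (x y : 𝔸) :
    Tendsto (fun n : ℕ => (exp ((n : ℝ)⁻¹ • x) * exp ((n : ℝ)⁻¹ • y)) ^ n)
      atTop (𝓝 (exp (x + y))) := by
  have hnorm (n : ℕ) (z : 𝔸) : ‖(n : ℝ)⁻¹ • z‖ = ‖z‖ / n := by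
    rw [norm_smul, norm_inv, RCLike.norm_natCast, inv_mul_eq_div]
  have hclose : (fun n : ℕ => exp ((n : ℝ)⁻¹ • x) * exp ((n : ℝ)⁻¹ • y)
      - exp ((n : ℝ)⁻¹ • (x + y))) =o[atTop] fun n => (n : ℝ)⁻¹ :=
    (isLittleO_exp_smul_mul_exp_smul_sub_exp_smul x y).comp_tendsto
      tendsto_inv_atTop_nhds_zero_nat
  have hdiff := tendsto_pow_sub_pow_of_isLittleO (t := ‖x‖ + ‖y‖) (by positivity)
    (fun n => by rw [add_div, ← hnorm, ← hnorm]; exact norm_exp_mul_exp_le _ _)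
    (fun n => (norm_exp_le_exp_norm _).trans <| by
      rw [hnorm, Real.exp_le_exp]; gcongr; exact norm_add_le x y) hclose
  rw [← zero_add (exp (x + y))]
  refine (hdiff.add_const (exp (x + y))).congr' ?_
  filter_upwards [eventually_ne_atTop 0] with n hn
  rw [exp_inv_smul_pow hn, sub_add_cancel]

end Exp

noncomputable def ContinuousLinearMap.mulLeftAlgHom (𝕜 𝔸 : Type*) [NontriviallyNormedField 𝕜]
    [NormedRing 𝔸] [NormedAlgebra 𝕜 𝔸] : 𝔸 →ₐ[𝕜] 𝔸 →L[𝕜] 𝔸 :=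
  AlgHom.ofLinearMap (ContinuousLinearMap.mul 𝕜 𝔸).toLinearMap (by ext; simp)
    (fun a b => by ext; simp [mul_assoc])

/-- The Lie product (Trotter) formula in a Banach algebra:
`(exp(X/n)·exp(Y/n))ⁿ → exp(X + Y)`. -/
theorem lie_product_formula {𝔸 : Type*} [NormedRing 𝔸] [NormedAlgebra ℝ 𝔸]
    [CompleteSpace 𝔸] (X Y : 𝔸) :
    Tendsto (fun n : ℕ =>
        (exp ((n : ℝ)⁻¹ • X) * exp ((n : ℝ)⁻¹ • Y)) ^ n)
      atTop (nhds (exp (X + Y))) := by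
  -- `𝔸 →L[ℝ] 𝔸` is a `NormOneClass` only when `𝔸` is nontrivial.
  rcases subsingleton_or_nontrivial 𝔸 with _ | _
  · exact tendsto_const_nhds.congr fun _ => Subsingleton.elim _ _
  let L := ContinuousLinearMap.mulLeftAlgHom ℝ 𝔸
  have hL : Continuous L := (ContinuousLinearMap.mul ℝ 𝔸).continuous
  let : NormedAlgebra ℚ 𝔸 := .restrictScalars ℚ ℝ 𝔸
  let : NormedAlgebra ℚ (𝔸 →L[ℝ] 𝔸) := .restrictScalars ℚ ℝ (𝔸 →L[ℝ] 𝔸)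
  have hrep := lie_product_formula_of_normOneClass (L X) (L Y)
  simp only [← map_smul, ← map_exp L hL, ← map_mul, ← map_pow, ← map_add] at hrep
  simpa [Function.comp_def, L, ContinuousLinearMap.mulLeftAlgHom] using
    ((ContinuousLinearMap.apply ℝ 𝔸 (1 : 𝔸)).continuous.tendsto _).comp hrep
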